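/- Consider on ℝ³ the vector fields X₀(x) = (cos x₃, sin x₃, 1) and X₁(x) = (0, 0, 1), and the family ℱ' = {X₀ + u·X₁ : u ∈ ℝ}. For every x' = (x₁', x₂', x₃') ∈ ℝ³, every t ≥ 0, and every ε > 0, there exists a piecewise integral curve η : [0, t] → ℝ³ of ℱ' with η(0) = x' such that |(η₁(s), η₂(s)) − (x₁', x₂')| < ε for all s ∈ [0, t]; in particular (η₁(t), η₂(t)) lies within distance ε of (x₁', x₂'). -/

import Mathlib

open scoped RealInnerProductSpace

/-- A piecewise integral curve of a family `F` of vector fields on `[0, T]`: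
a continuous curve which, on each piece of some partition `0 = t₀ < t₁ < … < t_m = T`,
is an integral curve of a single member of `F`. -/
def IsPiecewiseIntegralCurve {E : Type*} [NormedAddCommGroup E] [NormedSpace ℝ E]
    (F : Set (E → E)) (T : ℝ) (η : ℝ → E) : Prop :=
  ContinuousOn η (Set.Icc 0 T) ∧
  ∃ (m : ℕ) (τ : Fin (m + 1) → ℝ), τ 0 = 0 ∧ τ (Fin.last m) = T ∧ StrictMono τ ∧
    ∀ i : Fin m, ∃ V ∈ F, ∀ s ∈ Set.Ioo (τ i.castSucc) (τ i.succ),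
      HasDerivAt η (V (η s)) s

/-- The drift vector field `X₀(x) = (cos x₃, sin x₃, 1)` on `ℝ³`. -/
noncomputable def X0 : EuclideanSpace ℝ (Fin 3) → EuclideanSpace ℝ (Fin 3) :=
  fun x => WithLp.toLp 2 ![Real.cos (x 2), Real.sin (x 2), 1]

/-- The vector field `X₁(x) = (0, 0, 1)` on `ℝ³`. -/
noncomputable def X1 : EuclideanSpace ℝ (Fin 3) → EuclideanSpace ℝ (Fin 3) :=
  fun _ => WithLp.toLp 2 (![0, 0, 1] : Fin 3 → ℝ)

/-- The control family `ℱ' = {X₀ + u·X₁ : u ∈ ℝ}`. -/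
noncomputable def F' : Set (EuclideanSpace ℝ (Fin 3) → EuclideanSpace ℝ (Fin 3)) :=
  {V | ∃ u : ℝ, V = fun x => X0 x + u • X1 x}

/-!
With the constant control `u = ω - 1` the angle `x₃` turns at speed `ω`, so the planar part
`(x₁, x₂)` runs around a circle of radius `1 / ω` through `(x₁', x₂')` and never leaves the
disc of radius `2 / ω` about it; `ω = 4 / ε` does the job.
-/

theorem isPiecewiseIntegralCurve_of_hasDerivAt {E : Type*} [NormedAddCommGroup E]
    [NormedSpace ℝ E] {F : Set (E → E)} {V : E → E} {T : ℝ} {η : ℝ → E}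
    (hη : ∀ s ∈ Set.Icc 0 T, HasDerivAt η (V (η s)) s) (hV : V ∈ F) (hT : 0 ≤ T) :
    IsPiecewiseIntegralCurve F T η := by
  refine ⟨fun s hs => (hη s hs).continuousAt.continuousWithinAt, ?_⟩
  rcases hT.eq_or_lt with rfl | hT
  · exact ⟨0, fun _ => 0, rfl, rfl, Fin.strictMono_iff_lt_succ.mpr Fin.elim0, Fin.elim0⟩
  · refine ⟨1, ![0, T], rfl, rfl, Fin.strictMono_iff_lt_succ.mpr fun i => ?_, fun i => ?_⟩
    · fin_cases i; simpa using hT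
    · fin_cases i
      exact ⟨V, hV, fun s hs => hη s (Set.Ioo_subset_Icc_self (by simpa using hs))⟩

theorem PiLp.hasDerivAt_toLp_of_forall {𝕜 ι : Type*} [NontriviallyNormedField 𝕜] [Fintype ι]
    {E : ι → Type*} [∀ i, NormedAddCommGroup (E i)] [∀ i, NormedSpace 𝕜 (E i)]
    (p : ENNReal) [Fact (1 ≤ p)] {φ : 𝕜 → ∀ i, E i} {φ' : ∀ i, E i} {x : 𝕜}
    (h : ∀ i, HasDerivAt (fun r => φ r i) (φ' i) x) :
    HasDerivAt (fun r => WithLp.toLp p (φ r)) (WithLp.toLp p φ') x :=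
  (PiLp.hasFDerivAt_toLp p (φ x)).comp_hasDerivAt x (hasDerivAt_pi.mpr h)

theorem sin_sub_sin_sq_add_cos_sub_cos_sq_le_four (a b : ℝ) :
    (Real.sin a - Real.sin b) ^ 2 + (Real.cos b - Real.cos a) ^ 2 ≤ 4 := by
  nlinarith [Real.sin_sq_add_cos_sq a, Real.sin_sq_add_cos_sq b,
    sq_nonneg (Real.sin a + Real.sin b), sq_nonneg (Real.cos a + Real.cos b)]

noncomputable def spiral (x : EuclideanSpace ℝ (Fin 3)) (ω s : ℝ) : EuclideanSpace ℝ (Fin 3) :=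
  WithLp.toLp 2 ![x 0 + (Real.sin (x 2 + ω * s) - Real.sin (x 2)) / ω,
    x 1 + (Real.cos (x 2) - Real.cos (x 2 + ω * s)) / ω, x 2 + ω * s]

section spiral

variable (x : EuclideanSpace ℝ (Fin 3)) (ω : ℝ)

theorem spiral_zero : spiral x ω 0 = x := by
  ext i; fin_cases i <;> simp [spiral]

theorem hasDerivAt_spiral (hω : ω ≠ 0) (s : ℝ) :
    HasDerivAt (spiral x ω) (X0 (spiral x ω s) + (ω - 1) • X1 (spiral x ω s)) s := by
  have hθ : HasDerivAt (fun r => x 2 + ω * r) ω s := by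
    simpa using ((hasDerivAt_id s).const_mul ω).const_add (x 2)
  have hsin := (((Real.hasDerivAt_sin _).comp s hθ).sub_const (Real.sin (x 2))).div_const ω
  have hcos := (((Real.hasDerivAt_cos _).comp s hθ).const_sub (Real.cos (x 2))).div_const ω
  have hfield : X0 (spiral x ω s) + (ω - 1) • X1 (spiral x ω s) =
      WithLp.toLp 2 ![Real.cos (x 2 + ω * s), Real.sin (x 2 + ω * s), ω] := by
    ext i; fin_cases i <;> simp [X0, X1, spiral]
  rw [hfield]
  refine PiLp.hasDerivAt_toLp_of_forall 2 fun i => ?_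
  fin_cases i
  · simpa [mul_div_cancel_right₀ _ hω] using hsin.const_add (x 0)
  · simpa [mul_div_cancel_right₀ _ hω] using hcos.const_add (x 1)
  · simpa using hθ

theorem sqrt_planar_displacement_spiral_le (hω : 0 < ω) (s : ℝ) :
    Real.sqrt ((spiral x ω s 0 - x 0) ^ 2 + (spiral x ω s 1 - x 1) ^ 2) ≤ 2 / ω := by
  have hsq : (spiral x ω s 0 - x 0) ^ 2 + (spiral x ω s 1 - x 1) ^ 2 =
      ((Real.sin (x 2 + ω * s) - Real.sin (x 2)) ^ 2
        + (Real.cos (x 2) - Real.cos (x 2 + ω * s)) ^ 2) / ω ^ 2 := by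
    simp [spiral]; ring
  rw [Real.sqrt_le_left (by positivity), hsq, div_pow,
    div_le_div_iff_of_pos_right (by positivity)]
  linarith [sin_sub_sin_sq_add_cos_sub_cos_sq_le_four (x 2 + ω * s) (x 2)]

end spiral

/-- For every initial point `x'`, every time `t ≥ 0` and every `ε > 0`,
there is a piecewise integral curve of `ℱ'` starting at `x'` whose planar components
`(η₁, η₂)` stay within (Euclidean) distance `ε` of `(x₁', x₂')` on all of `[0, t]`. -/
theorem statement13 (x' : EuclideanSpace ℝ (Fin 3)) (t : ℝ) (ht : 0 ≤ t)
    (ε : ℝ) (hε : 0 < ε) :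
    ∃ η : ℝ → EuclideanSpace ℝ (Fin 3),
      IsPiecewiseIntegralCurve F' t η ∧ η 0 = x' ∧
      ∀ s ∈ Set.Icc 0 t,
        Real.sqrt ((η s 0 - x' 0) ^ 2 + (η s 1 - x' 1) ^ 2) < ε := by
  have hω : 0 < 4 / ε := by positivity
  have hcurve : IsPiecewiseIntegralCurve F' t (spiral x' (4 / ε)) :=
    isPiecewiseIntegralCurve_of_hasDerivAt (fun s _ => hasDerivAt_spiral x' _ hω.ne' s)
      ⟨_, rfl⟩ ht
  refine ⟨spiral x' (4 / ε), hcurve, spiral_zero x' _, fun s _ => ?_⟩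
  calc _ ≤ 2 / (4 / ε) := sqrt_planar_displacement_spiral_le x' _ hω s
    _ < ε := by field_simp; linarith
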